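/- The set { ((k+1)², k+1, k(k-1)/2, k) : k ∈ ℕ } ⊆ ℕ⁴ is not semilinear. -/

import Mathlib

/-- A linear subset of ℕᵈ: `v₀ + ℕv₁ + ⋯ + ℕv_k`. -/
def IsLinearSetNat {d : ℕ} (S : Set (Fin d → ℕ)) : Prop :=
  ∃ (v₀ : Fin d → ℕ) (k : ℕ) (v : Fin k → Fin d → ℕ),
    S = {x | ∃ c : Fin k → ℕ, x = v₀ + ∑ i, c i • v i}

/-- A semilinear subset of ℕᵈ: a finite union of linear sets. -/
def IsSemilinearSetNat {d : ℕ} (S : Set (Fin d → ℕ)) : Prop :=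
  ∃ (m : ℕ) (T : Fin m → Set (Fin d → ℕ)),
    (∀ i, IsLinearSetNat (T i)) ∧ S = ⋃ i, T i

/-!
An infinite semilinear set has an infinite linear component, and an infinite linear set has a
nonzero period `w`, so it contains a whole progression `p + ℕ w`. The points
`((k+1)², k+1, k(k-1)/2, k)` lie on a strictly convex curve: if three of them are in arithmetic
progression, their last coordinates `a, b, e` satisfy `a + e = 2b` and their first coordinates
`(a+1)² + (e+1)² = 2(b+1)²`, which forces `a = b = e`.
-/

theorem IsLinearSetNat.exists_arithProgression {d : ℕ} {L : Set (Fin d → ℕ)}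
    (hL : IsLinearSetNat L) (hinf : L.Infinite) :
    ∃ p w : Fin d → ℕ, w ≠ 0 ∧ ∀ n : ℕ, p + n • w ∈ L := by
  obtain ⟨v₀, k, v, rfl⟩ := hL
  by_cases hv : ∃ i, v i ≠ 0
  · obtain ⟨i, hi⟩ := hv
    refine ⟨v₀, v i, hi, fun n => ⟨Pi.single i n, ?_⟩⟩
    simp [Pi.single_apply]
  · simp only [not_exists, not_not] at hv
    refine absurd ((Set.finite_singleton v₀).subset ?_) hinf
    rintro x ⟨c, rfl⟩
    simp [hv]

theorem IsSemilinearSetNat.exists_arithProgression {d : ℕ} {S : Set (Fin d → ℕ)}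
    (hS : IsSemilinearSetNat S) (hinf : S.Infinite) :
    ∃ p w : Fin d → ℕ, w ≠ 0 ∧ ∀ n : ℕ, p + n • w ∈ S := by
  obtain ⟨m, T, hT, rfl⟩ := hS
  obtain ⟨i, hi⟩ : ∃ i, (T i).Infinite := by
    by_contra! h
    exact hinf (Set.finite_iUnion h)
  obtain ⟨p, w, hw, hp⟩ := (hT i).exists_arithProgression hi
  exact ⟨p, w, hw, fun n => Set.mem_iUnion_of_mem i (hp n)⟩

def quadraticTuple (k : ℕ) : Fin 4 → ℕ := ![(k + 1) ^ 2, k + 1, k * (k - 1) / 2, k]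

theorem quadraticTuple_injective : Function.Injective quadraticTuple := fun a b hab => by
  simpa [quadraticTuple] using congrFun hab 3

theorem quadraticTuple_eq_of_add_eq_two_smul {a b e : ℕ}
    (h : quadraticTuple a + quadraticTuple e = 2 • quadraticTuple b) : a = b := by
  have h3 : a + e = 2 * b := by simpa [quadraticTuple] using congrFun h 3
  have h0 : (a + 1) ^ 2 + (e + 1) ^ 2 = 2 * (b + 1) ^ 2 := by
    simpa [quadraticTuple] using congrFun h 0
  have hae : a = e := by nlinarith [sq_nonneg ((a : ℤ) - e)]
  omega

/-- the set { ((k+1)², k+1, k(k-1)/2, k) : k ∈ ℕ } ⊆ ℕ⁴ is not semilinear. -/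
theorem quadratic_tuples_not_semilinear :
    ¬ IsSemilinearSetNat
      {x : Fin 4 → ℕ | ∃ k : ℕ, x = ![(k + 1) ^ 2, k + 1, k * (k - 1) / 2, k]} := by
  intro hS
  obtain ⟨p, w, hw, hp⟩ := hS.exists_arithProgression
    (Set.infinite_of_injective_forall_mem quadraticTuple_injective fun k => ⟨k, rfl⟩)
  obtain ⟨a, ha : p + 0 • w = quadraticTuple a⟩ := hp 0
  obtain ⟨b, hb : p + 1 • w = quadraticTuple b⟩ := hp 1
  obtain ⟨e, he : p + 2 • w = quadraticTuple e⟩ := hp 2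
  have hab : a = b := quadraticTuple_eq_of_add_eq_two_smul (e := e) <| by
    rw [← ha, ← hb, ← he]
    ext i
    simp only [Pi.add_apply, Pi.smul_apply, smul_eq_mul]
    ring
  apply hw
  simpa [hab, ← hb] using ha
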